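/- For the hypersurface {t = t₀} of (ℝ⁴, g̃) with unit normal ξ = e₄ and tangent orthonormal frame {e₁, e₂, e₃}, the second fundamental form h(eᵢ, eⱼ) = g̃(∇̃_{eᵢ} eⱼ, e₄) (i, j ∈ {1,2,3}) has matrix [[0, 1/2, 0], [1/2, 0, 1/2], [0, 1/2, 0]] at every point. In particular h ≠ 0 (the hypersurface is not totally geodesic) and the mean curvature H = (1/3)(h₁₁ + h₂₂ + h₃₃) = 0 (the hypersurface is minimal). -/

import Mathlib

noncomputable section

/-- The left-invariant frame fields e₁,e₂,e₃,e₄ on ℝ⁴ (coordinates x,y,z,t = p 0,...,p 3). -/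
def eVF (i : Fin 4) (p : Fin 4 → ℝ) : Fin 4 → ℝ :=
  ![![1, 0, 0, 0],
    ![p 3, 1, 0, 0],
    ![(p 3) ^ 2 / 2, p 3, 1, 0],
    ![0, 0, 0, 1]] i

/-- The matrix of the metric g̃ at a point with last coordinate t. -/
def gMat (t : ℝ) : Matrix (Fin 4) (Fin 4) ℝ :=
  !![1, -t, t ^ 2 / 2, 0;
     -t, 1 + t ^ 2, -t * (1 + t ^ 2 / 2), 0;
     t ^ 2 / 2, -t * (1 + t ^ 2 / 2), 1 + t ^ 2 + t ^ 4 / 4, 0;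
     0, 0, 0, 1]

/-- The metric g̃ as a bilinear form on each tangent space. -/
def gMet (p X Y : Fin 4 → ℝ) : ℝ :=
  ∑ i, ∑ j, gMat (p 3) i j * X i * Y j

/-- Partial derivative in direction of the i-th coordinate. -/
def pd (i : Fin 4) (f : (Fin 4 → ℝ) → ℝ) (p : Fin 4 → ℝ) : ℝ :=
  deriv (fun s => f (Function.update p i s)) (p i)

/-- The Christoffel symbols Γᵏᵢⱼ of g̃. -/
def Chr (p : Fin 4 → ℝ) (k i j : Fin 4) : ℝ :=
  (1 / 2) * ∑ l, (gMat (p 3))⁻¹ k l *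
    (pd i (fun q => gMat (q 3) j l) p + pd j (fun q => gMat (q 3) i l) p
      - pd l (fun q => gMat (q 3) i j) p)

/-- The Levi-Civita connection of g̃ in coordinates. -/
def nabla (X Y : (Fin 4 → ℝ) → (Fin 4 → ℝ)) (p : Fin 4 → ℝ) : Fin 4 → ℝ :=
  fun k => (∑ i, X p i * pd i (fun q => Y q k) p)
    + ∑ i, ∑ j, Chr p k i j * X p i * Y p j

/-- Lie bracket of vector fields on ℝ⁴. -/
def bracket (X Y : (Fin 4 → ℝ) → (Fin 4 → ℝ)) (p : Fin 4 → ℝ) : Fin 4 → ℝ :=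
  fderiv ℝ Y p (X p) - fderiv ℝ X p (Y p)

/-- The curvature tensor R̃(X,Y)Z = ∇̃_X ∇̃_Y Z − ∇̃_Y ∇̃_X Z − ∇̃_{[X,Y]} Z. -/
def Riem (X Y Z : (Fin 4 → ℝ) → (Fin 4 → ℝ)) (p : Fin 4 → ℝ) : Fin 4 → ℝ :=
  nabla X (nabla Y Z) p - nabla Y (nabla X Z) p - nabla (bracket X Y) Z p

/-- Components of the second fundamental form of the hypersurface {t = t₀}
with unit normal e₄ and tangent frame {e₁,e₂,e₃}. -/
def sff (p : Fin 4 → ℝ) (i j : Fin 3) : ℝ :=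
  gMet p (nabla (eVF i.castSucc) (eVF j.castSucc) p) (eVF 3 p)

/-!
The `t`-row of `g̃` is constant, so `∂ₜ` is a unit normal geodesic field of the slices and the
Christoffel symbols reduce to `Γᵗₐᵦ = -½ ∂ₜ g̃ₐᵦ`. As `e₁, e₂, e₃` have no `∂ₜ`-component, this gives
`h(eᵢ, eⱼ) = -½ (∂ₜ g̃)(eᵢ, eⱼ)`, a polynomial identity in `t` whose value does not depend on `t`.
-/

lemma pd_const (i : Fin 4) (c : ℝ) (p : Fin 4 → ℝ) : pd i (fun _ => c) p = 0 :=
  deriv_const _ _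

lemma pd_comp_apply_self (k : Fin 4) (f : ℝ → ℝ) (p : Fin 4 → ℝ) :
    pd k (fun q => f (q k)) p = deriv f (p k) := by
  simp only [pd, Function.update_self]

def gMatDeriv (t : ℝ) : Matrix (Fin 4) (Fin 4) ℝ :=
  !![0, -1, t, 0;
     -1, 2 * t, -(1 + 3 * t ^ 2 / 2), 0;
     t, -(1 + 3 * t ^ 2 / 2), 2 * t + t ^ 3, 0;
     0, 0, 0, 0]

lemma hasDerivAt_gMat_apply (a b : Fin 4) (t : ℝ) :
    HasDerivAt (fun s => gMat s a b) (gMatDeriv t a b) t := by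
  have hsq := hasDerivAt_pow 2 t
  have hcube : HasDerivAt (fun s : ℝ => -s * (1 + s ^ 2 / 2)) (-(1 + 3 * t ^ 2 / 2)) t :=
    ((hasDerivAt_neg' t).mul ((hsq.div_const 2).const_add 1)).congr_deriv (by ring)
  have hquartic : HasDerivAt (fun s : ℝ => 1 + s ^ 2 + s ^ 4 / 4) (2 * t + t ^ 3) t :=
    ((hsq.const_add 1).add ((hasDerivAt_pow 4 t).div_const 4)).congr_deriv (by ring)
  fin_cases a <;> fin_cases b <;>
    simp only [gMat, gMatDeriv, Fin.zero_eta, Fin.mk_one, Fin.reduceFinMk, Matrix.of_apply,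
      Matrix.cons_val, Matrix.cons_val_zero, Matrix.cons_val_one] <;>
    first
    | exact hasDerivAt_const _ _
    | exact hasDerivAt_neg' t
    | exact hcube
    | exact hquartic
    | simpa using hsq.div_const 2
    | simpa using hsq.const_add 1

-- The inverse metric is `∑ᵢ eᵢ eᵢᵀ`, since the frame is orthonormal.
lemma gMat_inv (t : ℝ) : (gMat t)⁻¹ =
    !![1 + t ^ 2 + t ^ 4 / 4, t + t ^ 3 / 2, t ^ 2 / 2, 0;
       t + t ^ 3 / 2, 1 + t ^ 2, t, 0;
       t ^ 2 / 2, t, 1, 0;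
       0, 0, 0, 1] := by
  refine Matrix.inv_eq_right_inv ?_
  ext i j
  fin_cases i <;> fin_cases j <;> simp [gMat, Matrix.mul_apply, Fin.sum_univ_four] <;> ring

lemma gMat_apply_three (t : ℝ) (b : Fin 4) : gMat t b 3 = if b = 3 then 1 else 0 := by
  fin_cases b <;> simp [gMat]

lemma Chr_three (p : Fin 4 → ℝ) (a b : Fin 4) :
    Chr p 3 a b = -(1 / 2) * gMatDeriv (p 3) a b := by
  have hconst : ∀ c d : Fin 4, pd c (fun q => gMat (q 3) d 3) p = 0 := fun c d => by
    simp only [gMat_apply_three, pd_const]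
  have hderiv : pd 3 (fun q => gMat (q 3) a b) p = gMatDeriv (p 3) a b :=
    (pd_comp_apply_self 3 (fun s => gMat s a b) p).trans (hasDerivAt_gMat_apply a b _).deriv
  simp [Chr, gMat_inv, Fin.sum_univ_four, hconst, hderiv]

lemma gMet_eVF_three (p X : Fin 4 → ℝ) : gMet p X (eVF 3 p) = X 3 := by
  simp [gMet, eVF, gMat, Fin.sum_univ_four]

lemma nabla_apply_of_apply_eq_zero (X Y : (Fin 4 → ℝ) → Fin 4 → ℝ) {k : Fin 4}
    (hY : ∀ q, Y q k = 0) (p : Fin 4 → ℝ) :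
    nabla X Y p k = ∑ i, ∑ j, Chr p k i j * X p i * Y p j := by
  simp [nabla, hY, pd_const]

lemma eVF_castSucc_apply_three (i : Fin 3) (p : Fin 4 → ℝ) : eVF i.castSucc p 3 = 0 := by
  fin_cases i <;> rfl

lemma sff_eq_sum_gMatDeriv (p : Fin 4 → ℝ) (i j : Fin 3) :
    sff p i j = -(1 / 2) *
      ∑ a, ∑ b, gMatDeriv (p 3) a b * eVF i.castSucc p a * eVF j.castSucc p b := by
  simp only [sff, gMet_eVF_three, nabla_apply_of_apply_eq_zero _ _ (eVF_castSucc_apply_three j),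
    Chr_three, Finset.mul_sum, mul_assoc]

lemma sff_eq_matrix (p : Fin 4 → ℝ) (i j : Fin 3) :
    sff p i j = !![(0:ℝ), 1/2, 0; 1/2, 0, 1/2; 0, 1/2, 0] i j := by
  rw [sff_eq_sum_gMatDeriv]
  fin_cases i <;> fin_cases j <;> simp [gMatDeriv, eVF, Fin.sum_univ_four] <;> ring

/-- The second fundamental form of {t = t₀} has matrix
[[0,1/2,0],[1/2,0,1/2],[0,1/2,0]]; in particular h ≠ 0 (not totally geodesic)
and the mean curvature vanishes (minimal). -/
theorem nil4_second_fundamental_form (t₀ : ℝ) :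
    ∀ p : Fin 4 → ℝ, p 3 = t₀ →
      (∀ i j : Fin 3,
        sff p i j = !![(0:ℝ), 1/2, 0; 1/2, 0, 1/2; 0, 1/2, 0] i j) ∧
      (∃ i j : Fin 3, sff p i j ≠ 0) ∧
      (1 / 3 : ℝ) * (sff p 0 0 + sff p 1 1 + sff p 2 2) = 0 := by
  intro p _
  refine ⟨sff_eq_matrix p, ⟨0, 1, ?_⟩, ?_⟩ <;> simp [sff_eq_matrix]
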